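/- For every d ≥ 2, the unit d-hypocycloid region H_d ⊂ ℂ is closed under complex multiplication: if z₁ ∈ H_d and z₂ ∈ H_d, then z₁·z₂ ∈ H_d. Equivalently, H_d is idempotent with respect to the Minkowski product, H_d ⊠ H_d = H_d. -/

import Mathlib

/-!
For `d ≥ 3`, `angle d` is an increasing bijection of `ℝ`, so the boundary curve has the polar
equation `r = ρ t` with `ρ = radius d ∘ (angle d)⁻¹`, and the region is
`{s ρ(t) e^{it} : s ∈ [0, 1], t ∈ ℝ}`. Closure under products thus reduces to
`ρ s * ρ t ≤ ρ (s + t)`. The function `log ρ` is even and `2π/d`-periodic, vanishes at `0`, and is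
decreasing and convex on `[0, π/d]`, its slope at `t = angle d ψ` being `-(d/(d-2)) cot(dψ/2)`.
Such a function is superadditive, because it factors through the distance to `(2π/d)ℤ`, which is
subadditive. For `d = 2` the region is the segment `[-1, 1]`.
-/

open Real Set Filter Topology

def Hypocycloid (d : ℕ) : Set ℂ :=
  { z | ∃ s θ : ℝ, s ∈ Set.Icc (0 : ℝ) 1 ∧ θ ∈ Set.Icc (0 : ℝ) (2 * Real.pi) ∧
      z = (s : ℂ) * ((((d - 1 : ℝ) / d) * Real.cos θ + (1 / d : ℝ) * Real.cos ((d - 1 : ℝ) * θ) : ℝ) +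
        ((((d - 1 : ℝ) / d) * Real.sin θ - (1 / d : ℝ) * Real.sin ((d - 1 : ℝ) * θ) : ℝ)) * Complex.I) }

theorem strictMono_of_hasDerivAt_of_countable {f f' : ℝ → ℝ} {s : Set ℝ} (hs : s.Countable)
    (hf : ∀ x, HasDerivAt f (f' x) x) (hf'_nonneg : ∀ x, 0 ≤ f' x) (hf'_pos : ∀ x ∉ s, 0 < f' x) :
    StrictMono f := by
  have hmono : Monotone f := monotone_of_hasDerivAt_nonneg hf hf'_nonneg
  intro a b hab
  refine (hmono hab.le).lt_of_ne fun hfab ↦ ?_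
  obtain ⟨c, hcs, hc⟩ := (hs.dense_compl ℝ).exists_between hab
  have hconst : f =ᶠ[𝓝 c] fun _ ↦ f a := by
    filter_upwards [Ioo_mem_nhds hc.1 hc.2] with x hx
    exact le_antisymm (hfab ▸ hmono hx.2.le) (hmono hx.1.le)
  have hzero : f' c = 0 := (hf c).unique ((hasDerivAt_const c (f a)).congr_of_eventuallyEq hconst)
  exact (hf'_pos c hcs).ne' hzero

theorem antitoneOn_sin_div_one_sub_cos : AntitoneOn (fun x ↦ sin x / (1 - cos x)) (Ioo 0 π) := by
  have hmem : ∀ x ∈ Ioo 0 π, x / 2 ∈ Ioo (-(π / 2)) (π / 2) := fun x hx ↦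
    ⟨by linarith [hx.1, pi_pos], by linarith [hx.2]⟩
  have key : ∀ x ∈ Ioo 0 π, sin x / (1 - cos x) = (tan (x / 2))⁻¹ := by
    intro x hx
    have hs : sin (x / 2) ≠ 0 :=
      (sin_pos_of_pos_of_lt_pi (by linarith [hx.1]) (by linarith [hx.2, pi_pos])).ne'
    have hc : cos (x / 2) ≠ 0 := (cos_pos_of_mem_Ioo (hmem x hx)).ne'
    obtain ⟨y, rfl⟩ : ∃ y, x = 2 * y := ⟨x / 2, by ring⟩
    rw [mul_div_cancel_left₀ y two_ne_zero] at hs hc ⊢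
    rw [tan_eq_sin_div_cos, inv_div, sin_two_mul, cos_two_mul,
      show 1 - (2 * cos y ^ 2 - 1) = 2 * sin y ^ 2 by linarith [sin_sq_add_cos_sq y]]
    field_simp
  intro x hx y hy hxy
  simp only [key x hx, key y hy]
  exact inv_anti₀ (tan_pos_of_pos_of_lt_pi_div_two (by linarith [hx.1]) (by linarith [hx.2]))
    (strictMonoOn_tan.monotoneOn (hmem x hx) (hmem y hy) (by linarith))

theorem sqrt_sq_add_sq_eq_mul_sqrt {a : ℝ} (ha : 0 < a) (b : ℝ) :
    √(a ^ 2 + b ^ 2) = a * √(1 + (b / a) ^ 2) := by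
  rw [show a ^ 2 + b ^ 2 = a ^ 2 * (1 + (b / a) ^ 2) by field_simp, sqrt_mul (sq_nonneg a),
    sqrt_sq ha.le]

theorem cos_arctan_div_mul_sqrt {a : ℝ} (ha : 0 < a) (b : ℝ) :
    cos (arctan (b / a)) * √(a ^ 2 + b ^ 2) = a := by
  rw [cos_arctan, sqrt_sq_add_sq_eq_mul_sqrt ha]
  field_simp

theorem sin_arctan_div_mul_sqrt {a : ℝ} (ha : 0 < a) (b : ℝ) :
    sin (arctan (b / a)) * √(a ^ 2 + b ^ 2) = b := by
  rw [sin_arctan, sqrt_sq_add_sq_eq_mul_sqrt ha]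
  field_simp

theorem ConvexOn.add_le_of_le_add {M : ℝ} {f : ℝ → ℝ} (hf : ConvexOn ℝ (Icc 0 M) f)
    (hf_anti : AntitoneOn f (Icc 0 M)) (hf0 : f 0 ≤ 0) {a b c : ℝ} (ha : a ∈ Icc 0 M)
    (hb : b ∈ Icc 0 M) (hc : c ∈ Icc 0 M) (hcab : c ≤ a + b) : f a + f b ≤ f c := by
  have h0M : (0 : ℝ) ∈ Icc 0 M := ⟨le_rfl, ha.1.trans ha.2⟩
  set m := min (a + b) M
  have hm : m ∈ Icc 0 M := ⟨le_min (add_nonneg ha.1 hb.1) h0M.2, min_le_right _ _⟩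
  have hma : a ≤ m := le_min (le_add_of_nonneg_right hb.1) ha.2
  have hmb : b ≤ m := le_min (le_add_of_nonneg_left ha.1) hb.2
  have hfm : f m ≤ 0 := (hf_anti h0M hm hm.1).trans hf0
  have hfc : f m ≤ f c := hf_anti hc hm (le_min hcab hc.2)
  rcases hm.1.eq_or_lt with hm0 | hm0
  · have ha0 : a = 0 := by linarith [ha.1]
    have hb0 : b = 0 := by linarith [hb.1]
    rw [← hm0] at hfc
    rw [ha0, hb0]
    linarith
  have chord (x : ℝ) (hx : x ∈ Icc 0 m) : m * f x ≤ x * f m := by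
    have hw : 0 ≤ 1 - x / m := sub_nonneg.2 ((div_le_one hm0).2 hx.2)
    have h := hf.2 h0M hm hw (div_nonneg hx.1 hm0.le) (sub_add_cancel 1 (x / m))
    simp only [smul_eq_mul, mul_zero, zero_add, div_mul_cancel₀ x hm0.ne'] at h
    have := mul_nonpos_of_nonneg_of_nonpos hw hf0
    calc m * f x ≤ m * (x / m * f m) := by nlinarith
      _ = x * f m := by field_simp
  have hsum : m * (f a + f b) ≤ m * f m := by
    nlinarith [chord a ⟨ha.1, hma⟩, chord b ⟨hb.1, hmb⟩, min_le_left (a + b) M]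
  linarith [le_of_mul_le_mul_left hsum hm0]

theorem Function.Periodic.apply_norm_coe_addCircle {p : ℝ} {f : ℝ → ℝ} (hf : Function.Periodic f p)
    (hf_even : Function.Even f) (x : ℝ) : f ‖(x : AddCircle p)‖ = f x := by
  rw [AddCircle.norm_eq, ← hf.sub_int_mul_eq (round (p⁻¹ * x)) (x := x)]
  rcases abs_choice (x - round (p⁻¹ * x) * p) with h | h <;> rw [h]
  exact hf_even _

theorem Function.Periodic.add_le_of_convexOn {p : ℝ} (hp : 0 < p) {f : ℝ → ℝ}
    (hf : Function.Periodic f p) (hf_even : Function.Even f)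
    (hf_conv : ConvexOn ℝ (Icc 0 (p / 2)) f) (hf_anti : AntitoneOn f (Icc 0 (p / 2)))
    (hf0 : f 0 ≤ 0) (s t : ℝ) : f s + f t ≤ f (s + t) := by
  have hmem (x : ℝ) : ‖(x : AddCircle p)‖ ∈ Icc 0 (p / 2) :=
    ⟨norm_nonneg _, (AddCircle.norm_le_half_period p hp.ne').trans_eq (by rw [abs_of_pos hp])⟩
  rw [← hf.apply_norm_coe_addCircle hf_even s, ← hf.apply_norm_coe_addCircle hf_even t,
    ← hf.apply_norm_coe_addCircle hf_even (s + t)]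
  exact hf_conv.add_le_of_le_add hf_anti hf0 (hmem s) (hmem t) (hmem (s + t))
    (by simpa only [AddCircle.coe_add] using norm_add_le (s : AddCircle p) t)

namespace Hypocycloid

variable {d : ℕ}

noncomputable def curve (d : ℕ) (θ : ℝ) : ℂ :=
  ((((d - 1 : ℝ) / d) * cos θ + (1 / d : ℝ) * cos ((d - 1 : ℝ) * θ) : ℝ) : ℂ) +
    ((((d - 1 : ℝ) / d) * sin θ - (1 / d : ℝ) * sin ((d - 1 : ℝ) * θ) : ℝ) : ℂ) * Complex.I

theorem mem_iff {z : ℂ} : z ∈ Hypocycloid d ↔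
    ∃ s θ : ℝ, s ∈ Icc 0 1 ∧ θ ∈ Icc 0 (2 * π) ∧ z = s * curve d θ :=
  Iff.rfl

theorem curve_periodic (d : ℕ) : Function.Periodic (curve d) (2 * π) := by
  intro θ
  have h : (d - 1 : ℝ) * (θ + 2 * π) = (d - 1) * θ + ((d - 1 : ℤ) : ℝ) * (2 * π) := by
    push_cast; ring
  simp only [curve, h, cos_add_two_pi, sin_add_two_pi, cos_add_int_mul_two_pi,
    sin_add_int_mul_two_pi]

theorem ofReal_mul_curve_mem {s : ℝ} (hs : s ∈ Icc 0 1) (θ : ℝ) :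
    (s : ℂ) * curve d θ ∈ Hypocycloid d := by
  obtain ⟨θ', hθ', h⟩ := (curve_periodic d).exists_mem_Ico₀ two_pi_pos θ
  exact ⟨s, θ', hs, Ico_subset_Icc_self hθ', by rw [h]; rfl⟩

theorem one_mem (hd : d ≠ 0) : 1 ∈ Hypocycloid d := by
  have hcurve : curve d 0 = 1 := by
    simp only [curve, mul_zero, cos_zero, sin_zero]
    push_cast
    field_simp
    ring
  simpa [hcurve] using ofReal_mul_curve_mem (d := d) ⟨zero_le_one, le_rfl⟩ 0

theorem curve_two (θ : ℝ) : curve 2 θ = cos θ := by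
  simp only [curve]
  push_cast
  ring_nf

theorem mul_mem_two {z₁ z₂ : ℂ} (h₁ : z₁ ∈ Hypocycloid 2) (h₂ : z₂ ∈ Hypocycloid 2) :
    z₁ * z₂ ∈ Hypocycloid 2 := by
  obtain ⟨s₁, θ₁, hs₁, -, rfl⟩ := mem_iff.1 h₁
  obtain ⟨s₂, θ₂, hs₂, -, rfl⟩ := mem_iff.1 h₂
  set r := s₁ * cos θ₁ * (s₂ * cos θ₂)
  have hr : |r| ≤ 1 := by
    have h (s θ : ℝ) (hs : s ∈ Icc (0 : ℝ) 1) : |s * cos θ| ≤ 1 := by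
      rw [abs_mul, abs_of_nonneg hs.1]
      exact mul_le_one₀ hs.2 (abs_nonneg _) (abs_cos_le_one θ)
    rw [abs_mul]
    exact mul_le_one₀ (h s₁ θ₁ hs₁) (abs_nonneg _) (h s₂ θ₂ hs₂)
  have hmem := ofReal_mul_curve_mem (d := 2) ⟨zero_le_one, le_rfl⟩ (arccos r)
  rw [curve_two, cos_arccos (abs_le.1 hr).1 (abs_le.1 hr).2] at hmem
  rw [curve_two, curve_two]
  convert hmem using 1
  push_cast [r]
  ring

/- `curve d ψ = e^{iψ} w / d` with `w = (d - 1) + e^{-idψ}`: `scaledRadiusSq d ψ = |w|²`, and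
`angle d ψ = ψ + arg w` as soon as `re w > 0`, i.e. for `d ≥ 3`. -/
noncomputable def scaledRadiusSq (d : ℕ) (ψ : ℝ) : ℝ :=
  ((d - 1 : ℝ) + cos (d * ψ)) ^ 2 + sin (d * ψ) ^ 2

noncomputable def radius (d : ℕ) (ψ : ℝ) : ℝ := √(scaledRadiusSq d ψ) / d

noncomputable def angle (d : ℕ) (ψ : ℝ) : ℝ :=
  ψ - arctan (sin (d * ψ) / ((d - 1 : ℝ) + cos (d * ψ)))

theorem radius_periodic (hd : d ≠ 0) : Function.Periodic (radius d) (2 * π / d) := by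
  intro ψ
  have h : (d : ℝ) * (ψ + 2 * π / d) = d * ψ + 2 * π := by field_simp
  simp only [radius, scaledRadiusSq, h, cos_add_two_pi, sin_add_two_pi]

theorem angle_add_two_pi_div (hd : d ≠ 0) (ψ : ℝ) :
    angle d (ψ + 2 * π / d) = angle d ψ + 2 * π / d := by
  have h : (d : ℝ) * (ψ + 2 * π / d) = d * ψ + 2 * π := by field_simp
  simp only [angle, h, cos_add_two_pi, sin_add_two_pi]
  ring

theorem radius_even (d : ℕ) : Function.Even (radius d) := by
  intro ψ
  simp only [radius, scaledRadiusSq, mul_neg, cos_neg, sin_neg, neg_sq]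

theorem angle_neg (d : ℕ) (ψ : ℝ) : angle d (-ψ) = -angle d ψ := by
  simp only [angle, mul_neg, cos_neg, sin_neg, neg_div, arctan_neg]
  ring

theorem angle_zero (d : ℕ) : angle d 0 = 0 := by
  simp [angle]

theorem angle_pi_div (hd : d ≠ 0) : angle d (π / d) = π / d := by
  simp [angle, mul_div_cancel₀ π (Nat.cast_ne_zero.2 hd)]

theorem radius_zero (hd : d ≠ 0) : radius d 0 = 1 := by
  simp [radius, scaledRadiusSq, hd]

theorem natCast_mul_mem_Ioo (hd : d ≠ 0) {ψ : ℝ} (hψ : ψ ∈ Ioo 0 (π / d)) :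
    (d : ℝ) * ψ ∈ Ioo 0 π := by
  have hd0 : (0 : ℝ) < d := by positivity
  exact ⟨by nlinarith [hψ.1], by rw [← lt_div_iff₀' hd0]; exact hψ.2⟩

section Polar

variable (hd : 3 ≤ d)
include hd

theorem sub_one_add_cos_pos (ψ : ℝ) : 0 < (d - 1 : ℝ) + cos (d * ψ) := by
  have : (3 : ℝ) ≤ d := by exact_mod_cast hd
  linarith [neg_one_le_cos (d * ψ)]

theorem scaledRadiusSq_pos (ψ : ℝ) : 0 < scaledRadiusSq d ψ := by
  have := sub_one_add_cos_pos hd ψ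
  unfold scaledRadiusSq
  positivity

theorem radius_pos (ψ : ℝ) : 0 < radius d ψ := by
  have := scaledRadiusSq_pos hd ψ
  have : (0 : ℝ) < d := by positivity
  unfold radius
  positivity

theorem curve_eq_radius_mul_exp (ψ : ℝ) :
    curve d ψ = radius d ψ * Complex.exp (angle d ψ * Complex.I) := by
  have hc := cos_arctan_div_mul_sqrt (sub_one_add_cos_pos hd ψ) (sin (d * ψ))
  have hs := sin_arctan_div_mul_sqrt (sub_one_add_cos_pos hd ψ) (sin (d * ψ))
  have hd0 : (d : ℝ) ≠ 0 := by positivity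
  have hsub : (d - 1 : ℝ) * ψ = d * ψ - ψ := by ring
  have hx : (d - 1 : ℝ) / d * cos ψ + 1 / d * cos ((d - 1 : ℝ) * ψ) =
      radius d ψ * cos (angle d ψ) := by
    rw [radius, angle, scaledRadiusSq, cos_sub, hsub, cos_sub]
    field_simp
    linear_combination -cos ψ * hc - sin ψ * hs
  have hy : (d - 1 : ℝ) / d * sin ψ - 1 / d * sin ((d - 1 : ℝ) * ψ) =
      radius d ψ * sin (angle d ψ) := by
    rw [radius, angle, scaledRadiusSq, sin_sub, hsub, sin_sub]
    field_simp
    linear_combination -sin ψ * hc + cos ψ * hs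
  rw [curve, hx, hy, Complex.exp_mul_I, ← Complex.ofReal_cos, ← Complex.ofReal_sin]
  push_cast
  ring

theorem hasDerivAt_angle (ψ : ℝ) :
    HasDerivAt (angle d)
      ((d - 1) * (d - 2) * (1 - cos (d * ψ)) / scaledRadiusSq d ψ) ψ := by
  have hpos := sub_one_add_cos_pos hd ψ
  have hlin := hasDerivAt_const_mul (x := ψ) (d : ℝ)
  have hquot := (hlin.sin.div (hlin.cos.const_add (d - 1 : ℝ)) hpos.ne').arctan
  refine ((hasDerivAt_id ψ).sub hquot).congr_deriv ?_
  simp only [Pi.div_apply, scaledRadiusSq]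
  field_simp
  linear_combination (1 - (d : ℝ)) * sin_sq_add_cos_sq (d * ψ)

theorem hasDerivAt_log_radius (ψ : ℝ) :
    HasDerivAt (fun x ↦ log (radius d x))
      (-((d - 1) * d * sin (d * ψ)) / scaledRadiusSq d ψ) ψ := by
  have hd0 : (d : ℝ) ≠ 0 := by positivity
  have hlin := hasDerivAt_const_mul (x := ψ) (d : ℝ)
  have hQ : HasDerivAt (scaledRadiusSq d) (-(2 * (d - 1) * d * sin (d * ψ))) ψ := by
    refine (((hlin.cos.const_add (d - 1 : ℝ)).pow 2).add (hlin.sin.pow 2)).congr_deriv ?_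
    ring
  have hlog : (fun x ↦ log (radius d x)) = fun x ↦ log (scaledRadiusSq d x) / 2 - log d := by
    ext x
    rw [radius, log_div (sqrt_pos.2 (scaledRadiusSq_pos hd x)).ne' hd0,
      log_sqrt (scaledRadiusSq_pos hd x).le]
  rw [hlog]
  refine (((hQ.log (scaledRadiusSq_pos hd ψ).ne').div_const 2).sub_const _).congr_deriv ?_
  ring

theorem angle_strictMono : StrictMono (angle d) := by
  have hd2 : (2 : ℝ) < d := by exact_mod_cast hd
  refine strictMono_of_hasDerivAt_of_countable (s := {ψ | cos (d * ψ) = 1}) ?_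
    (hasDerivAt_angle hd) (fun ψ ↦ ?_) (fun ψ hψ ↦ ?_)
  · refine (countable_range fun n : ℤ ↦ n * (2 * π) / d).mono fun ψ hψ ↦ ?_
    obtain ⟨n, hn⟩ := (cos_eq_one_iff _).1 hψ
    exact ⟨n, by simp only; rw [hn]; field_simp⟩
  · have := cos_le_one (d * ψ)
    exact div_nonneg (mul_nonneg (by nlinarith) (by linarith)) (scaledRadiusSq_pos hd ψ).le
  · have := (cos_le_one (d * ψ)).lt_of_ne hψ
    exact div_pos (mul_pos (by nlinarith) (by linarith)) (scaledRadiusSq_pos hd ψ)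

theorem angle_surjective : Function.Surjective (angle d) := by
  have hcont : Continuous (angle d) :=
    continuous_iff_continuousAt.2 fun ψ ↦ (hasDerivAt_angle hd ψ).continuousAt
  refine hcont.surjective (tendsto_atTop_mono (fun ψ ↦ ?_)
    (tendsto_atTop_add_const_right _ (-(π / 2)) tendsto_id))
    (tendsto_atBot_mono (fun ψ ↦ ?_) (tendsto_atBot_add_const_right _ (π / 2) tendsto_id))
  · simp only [id, angle]
    linarith [arctan_lt_pi_div_two (sin (d * ψ) / ((d - 1 : ℝ) + cos (d * ψ)))]
  · simp only [id, angle]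
    linarith [neg_pi_div_two_lt_arctan (sin (d * ψ) / ((d - 1 : ℝ) + cos (d * ψ)))]

noncomputable def angleIso : ℝ ≃o ℝ :=
  StrictMono.orderIsoOfSurjective (angle d) (angle_strictMono hd) (angle_surjective hd)

@[simp]
theorem coe_angleIso : ⇑(angleIso hd) = angle d := rfl

@[simp]
theorem angle_angleIso_symm (t : ℝ) : angle d ((angleIso hd).symm t) = t :=
  (angleIso hd).apply_symm_apply t

theorem angleIso_symm_add_two_pi_div (t : ℝ) :
    (angleIso hd).symm (t + 2 * π / d) = (angleIso hd).symm t + 2 * π / d := by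
  apply (angleIso hd).injective
  simp [angle_add_two_pi_div (by omega : d ≠ 0)]

theorem angleIso_symm_neg (t : ℝ) : (angleIso hd).symm (-t) = -(angleIso hd).symm t := by
  apply (angleIso hd).injective
  simp [angle_neg]

theorem angleIso_symm_zero : (angleIso hd).symm 0 = 0 := by
  simp [OrderIso.symm_apply_eq, angle_zero]

theorem angleIso_symm_mem_Ioo {t : ℝ} (ht : t ∈ Ioo 0 (π / d)) :
    (angleIso hd).symm t ∈ Ioo 0 (π / d) := by
  have hπ : (angleIso hd).symm (π / d) = π / d := by
    simp [OrderIso.symm_apply_eq, angle_pi_div (by omega : d ≠ 0)]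
  exact ⟨angleIso_symm_zero hd ▸ (angleIso hd).symm.strictMono ht.1,
    hπ ▸ (angleIso hd).symm.strictMono ht.2⟩

noncomputable def polarRadius (t : ℝ) : ℝ := radius d ((angleIso hd).symm t)

theorem curve_angleIso_symm (t : ℝ) :
    curve d ((angleIso hd).symm t) = polarRadius hd t * Complex.exp (t * Complex.I) := by
  rw [curve_eq_radius_mul_exp hd, polarRadius, angle_angleIso_symm]

theorem continuous_log_polarRadius : Continuous fun t ↦ log (polarRadius hd t) :=
  (continuous_iff_continuousAt.2 fun ψ ↦ (hasDerivAt_log_radius hd ψ).continuousAt).comp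
    (angleIso hd).symm.continuous

theorem hasDerivAt_log_polarRadius {t : ℝ} (ht : t ∈ Ioo 0 (π / d)) :
    HasDerivAt (fun t ↦ log (polarRadius hd t))
      (-(d / (d - 2)) * (sin (d * (angleIso hd).symm t) / (1 - cos (d * (angleIso hd).symm t))))
      t := by
  set ψ := (angleIso hd).symm t
  have hd2 : (2 : ℝ) < d := by exact_mod_cast hd
  have hdψ := natCast_mul_mem_Ioo (by omega) (angleIso_symm_mem_Ioo hd ht)
  have hcos : 0 < 1 - cos (d * ψ) := by
    have := (cos_lt_cos_of_nonneg_of_le_pi le_rfl hdψ.2.le hdψ.1)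
    rw [cos_zero] at this
    linarith
  have hQ := scaledRadiusSq_pos hd ψ
  have hinv : HasDerivAt (angleIso hd).symm
      ((((d : ℝ) - 1) * (d - 2) * (1 - cos (d * ψ)) / scaledRadiusSq d ψ)⁻¹) t := by
    refine HasDerivAt.of_local_left_inverse (angleIso hd).symm.continuous.continuousAt
      (hasDerivAt_angle hd ψ) ?_ (Eventually.of_forall (angleIso hd).apply_symm_apply)
    have : (0 : ℝ) < ((d : ℝ) - 1) * (d - 2) := by nlinarith
    positivity
  refine ((hasDerivAt_log_radius hd ψ).comp t hinv).congr_deriv ?_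
  have : (d : ℝ) - 1 ≠ 0 := by linarith
  have : (d : ℝ) - 2 ≠ 0 := by linarith
  field_simp

theorem convexOn_log_polarRadius :
    ConvexOn ℝ (Icc 0 (π / d)) fun t ↦ log (polarRadius hd t) := by
  refine MonotoneOn.convexOn_of_deriv (convex_Icc _ _) (continuous_log_polarRadius hd).continuousOn
    (fun t ht ↦ ?_) ?_
  · rw [interior_Icc] at ht
    exact (hasDerivAt_log_polarRadius hd ht).differentiableAt.differentiableWithinAt
  rw [interior_Icc]
  intro s hs t ht hst
  have hd0 : d ≠ 0 := by omega
  have hd2 : (2 : ℝ) < d := by exact_mod_cast hd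
  rw [(hasDerivAt_log_polarRadius hd hs).deriv, (hasDerivAt_log_polarRadius hd ht).deriv]
  refine mul_le_mul_of_nonpos_left (antitoneOn_sin_div_one_sub_cos
    (natCast_mul_mem_Ioo hd0 (angleIso_symm_mem_Ioo hd hs))
    (natCast_mul_mem_Ioo hd0 (angleIso_symm_mem_Ioo hd ht)) ?_) ?_
  · exact mul_le_mul_of_nonneg_left ((angleIso hd).symm.monotone hst) (Nat.cast_nonneg d)
  · exact neg_nonpos.2 (div_nonneg (by linarith) (by linarith))

theorem antitoneOn_log_polarRadius :
    AntitoneOn (fun t ↦ log (polarRadius hd t)) (Icc 0 (π / d)) := by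
  refine antitoneOn_of_deriv_nonpos (convex_Icc _ _) (continuous_log_polarRadius hd).continuousOn
    (fun t ht ↦ ?_) fun t ht ↦ ?_
  · rw [interior_Icc] at ht
    exact (hasDerivAt_log_polarRadius hd ht).differentiableAt.differentiableWithinAt
  rw [interior_Icc] at ht
  have hd2 : (2 : ℝ) < d := by exact_mod_cast hd
  have hdψ := natCast_mul_mem_Ioo (by omega) (angleIso_symm_mem_Ioo hd ht)
  rw [(hasDerivAt_log_polarRadius hd ht).deriv]
  refine mul_nonpos_of_nonpos_of_nonneg (neg_nonpos.2 (div_nonneg (by linarith) (by linarith)))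
    (div_nonneg (sin_pos_of_pos_of_lt_pi hdψ.1 hdψ.2).le (sub_nonneg.2 (cos_le_one _)))

theorem polarRadius_mul_le (s t : ℝ) :
    polarRadius hd s * polarRadius hd t ≤ polarRadius hd (s + t) := by
  have hd0 : d ≠ 0 := by omega
  have hper : Function.Periodic (fun t ↦ log (polarRadius hd t)) (2 * π / d) := fun t ↦ by
    simp only [polarRadius, angleIso_symm_add_two_pi_div, radius_periodic hd0 _]
  have heven : Function.Even fun t ↦ log (polarRadius hd t) := fun t ↦ by
    simp only [polarRadius, angleIso_symm_neg, radius_even d _]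
  have hzero : log (polarRadius hd 0) ≤ 0 := by
    rw [polarRadius, angleIso_symm_zero, radius_zero hd0, log_one]
  have hhalf : 2 * π / d / 2 = π / d := by ring
  have key := hper.add_le_of_convexOn (by positivity) heven
    (hhalf ▸ convexOn_log_polarRadius hd) (hhalf ▸ antitoneOn_log_polarRadius hd) hzero s t
  have hpos (t : ℝ) : 0 < polarRadius hd t := radius_pos hd _
  rwa [← log_mul (hpos s).ne' (hpos t).ne', log_le_log_iff (mul_pos (hpos s) (hpos t)) (hpos _)]
    at key

theorem mem_iff_polar {z : ℂ} : z ∈ Hypocycloid d ↔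
    ∃ s ∈ Icc (0 : ℝ) 1, ∃ t : ℝ, z = s * polarRadius hd t * Complex.exp (t * Complex.I) := by
  constructor
  · intro hz
    obtain ⟨s, θ, hs, -, rfl⟩ := mem_iff.1 hz
    refine ⟨s, hs, angle d θ, ?_⟩
    rw [mul_assoc, ← curve_angleIso_symm, ← coe_angleIso hd, OrderIso.symm_apply_apply]
  · rintro ⟨s, hs, t, rfl⟩
    rw [mul_assoc, ← curve_angleIso_symm]
    exact ofReal_mul_curve_mem hs _

end Polar

theorem mul_mem (hd : 3 ≤ d) {z₁ z₂ : ℂ} (h₁ : z₁ ∈ Hypocycloid d) (h₂ : z₂ ∈ Hypocycloid d) :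
    z₁ * z₂ ∈ Hypocycloid d := by
  obtain ⟨s₁, hs₁, t₁, rfl⟩ := (mem_iff_polar hd).1 h₁
  obtain ⟨s₂, hs₂, t₂, rfl⟩ := (mem_iff_polar hd).1 h₂
  have hpos (t : ℝ) : 0 < polarRadius hd t := radius_pos hd _
  have hratio : polarRadius hd t₁ * polarRadius hd t₂ / polarRadius hd (t₁ + t₂) ∈ Icc (0 : ℝ) 1 :=
    ⟨div_nonneg (mul_pos (hpos _) (hpos _)).le (hpos _).le,
      (div_le_one (hpos _)).2 (polarRadius_mul_le hd t₁ t₂)⟩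
  refine (mem_iff_polar hd).2 ⟨s₁ * s₂ * (polarRadius hd t₁ * polarRadius hd t₂ /
    polarRadius hd (t₁ + t₂)), ⟨mul_nonneg (mul_nonneg hs₁.1 hs₂.1) hratio.1,
      mul_le_one₀ (mul_le_one₀ hs₁.2 hs₂.1 hs₂.2) hratio.1 hratio.2⟩, t₁ + t₂, ?_⟩
  have : (polarRadius hd (t₁ + t₂) : ℂ) ≠ 0 := Complex.ofReal_ne_zero.2 (hpos _).ne'
  push_cast
  rw [add_mul, Complex.exp_add]
  field_simp

end Hypocycloid

open Pointwise in
/-- For every `d ≥ 2`, the unit `d`-hypocycloid region is closed under complex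
multiplication; equivalently, it is idempotent with respect to the Minkowski product:
`H_d ⊠ H_d = H_d`. -/
theorem hypocycloid_mul_closed {d : ℕ} (hd : 2 ≤ d) :
    (∀ z₁ ∈ Hypocycloid d, ∀ z₂ ∈ Hypocycloid d, z₁ * z₂ ∈ Hypocycloid d) ∧
    Hypocycloid d * Hypocycloid d = Hypocycloid d := by
  have hmul : ∀ z₁ ∈ Hypocycloid d, ∀ z₂ ∈ Hypocycloid d, z₁ * z₂ ∈ Hypocycloid d := by
    obtain rfl | hd3 := hd.eq_or_lt
    · exact fun z₁ h₁ z₂ h₂ ↦ Hypocycloid.mul_mem_two h₁ h₂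
    · exact fun z₁ h₁ z₂ h₂ ↦ Hypocycloid.mul_mem hd3 h₁ h₂
  exact ⟨hmul, (Set.mul_subset_iff.2 hmul).antisymm
    (Set.subset_mul_left _ (Hypocycloid.one_mem (by omega)))⟩
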